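/- arXiv:1601.04895 — 6 statements merged into one kernel-verified Lean document; each statement's English description precedes it below -/
import Mathlib

section
/- For every real number x ≥ 0, the natural logarithm satisfies ln(1+x) ≤ x - (x²/2)·(1/(1+x/3))², with equality if and only if x = 0. -/
/-! The gap `g(x) = x - x²/2 · (1/(1 + x/3))² - ln(1 + x)` vanishes at `0` and has derivative
`x³(x + 9) / ((3 + x)³(1 + x))`, which is positive for `x > 0`; hence `g` is strictly increasing
on `[0, ∞)` and positive on `(0, ∞)`. -/

open Real Set

noncomputable def logUpperBoundGap (x : ℝ) : ℝ :=
  x - x ^ 2 / 2 * (1 / (1 + x / 3)) ^ 2 - log (1 + x)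

lemma logUpperBoundGap_zero : logUpperBoundGap 0 = 0 := by
  simp [logUpperBoundGap]

lemma hasDerivAt_logUpperBoundGap {x : ℝ} (hx : -1 < x) :
    HasDerivAt logUpperBoundGap (x ^ 3 * (x + 9) / ((3 + x) ^ 3 * (1 + x))) x := by
  have h1 : 1 + x ≠ 0 := by linarith
  have h3 : 3 + x ≠ 0 := by linarith
  have hden : HasDerivAt (fun y : ℝ => 1 + y / 3) (1 / 3) x :=
    ((hasDerivAt_id x).div_const 3).const_add 1
  have hlog : HasDerivAt (fun y : ℝ => log (1 + y)) (1 / (1 + x)) x := by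
    simpa using ((hasDerivAt_id x).const_add 1).log h1
  have hgap : HasDerivAt logUpperBoundGap _ x := ((hasDerivAt_id x).sub
    (((hasDerivAt_pow 2 x).div_const 2).mul
      (((hasDerivAt_const x 1).fun_div hden (by linarith)).fun_pow 2))).sub hlog
  refine hgap.congr_deriv ?_
  norm_num
  field_simp
  ring

lemma strictMonoOn_logUpperBoundGap : StrictMonoOn logUpperBoundGap (Ici 0) := by
  have hderiv {x : ℝ} (hx : 0 ≤ x) := hasDerivAt_logUpperBoundGap (x := x) (by linarith)
  refine strictMonoOn_of_hasDerivWithinAt_pos (convex_Ici 0)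
    (f' := fun x => x ^ 3 * (x + 9) / ((3 + x) ^ 3 * (1 + x)))
    (fun x hx => (hderiv hx).continuousAt.continuousWithinAt) (fun x hx => ?_) (fun x hx => ?_)
  all_goals rw [interior_Ici] at hx
  · exact (hderiv (le_of_lt hx)).hasDerivWithinAt
  · have hx : 0 < x := hx
    positivity

lemma log_one_add_lt_of_pos {x : ℝ} (hx : 0 < x) :
    log (1 + x) < x - x ^ 2 / 2 * (1 / (1 + x / 3)) ^ 2 := by
  have := strictMonoOn_logUpperBoundGap self_mem_Ici hx.le hx
  rw [logUpperBoundGap_zero, logUpperBoundGap] at this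
  linarith

theorem log_upper_bound (x : ℝ) (hx : 0 ≤ x) :
    Real.log (1 + x) ≤ x - x ^ 2 / 2 * (1 / (1 + x / 3)) ^ 2 ∧
    (Real.log (1 + x) = x - x ^ 2 / 2 * (1 / (1 + x / 3)) ^ 2 ↔ x = 0) := by
  rcases hx.eq_or_lt with rfl | hpos
  · norm_num
  · exact ⟨(log_one_add_lt_of_pos hpos).le,
      ⟨fun h => absurd h (log_one_add_lt_of_pos hpos).ne, fun h => absurd h hpos.ne'⟩⟩
end

section
/- For every real number x > 0, letting g(x) = x - ln(1+x), the strict inequalities (2/3)·g(x) < x - √(2·g(x)) < g(x) hold. -/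
/-!
Write `L = log (1 + x) > 0`. Since `1 + x = exp L`, the right inequality is `L ^ 2 < 2 (x - L)`,
i.e. `1 + L + L ^ 2 / 2 < exp L`. The left one is `18 (x - L) < (x + 2 L) ^ 2`: the difference
vanishes at `x = 0` and has derivative `2 ((x + 2 L) (x + 3) - 9 x) / (1 + x)`, which is positive
by the classical bound `2 x / (x + 2) < log (1 + x)`.
-/

open Real

theorem one_add_add_sq_div_two_lt_exp {t : ℝ} (ht : 0 < t) : 1 + t + t ^ 2 / 2 < exp t := by
  have h := sum_le_exp_of_nonneg ht.le 4
  simp only [Finset.sum_range_succ, Finset.sum_range_zero, Nat.factorial] at h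
  norm_num at h
  nlinarith [pow_pos ht 3]

theorem sq_log_one_add_add_two_mul_log_lt {x : ℝ} (hx : 0 < x) :
    log (1 + x) ^ 2 + 2 * log (1 + x) < 2 * x := by
  have h := one_add_add_sq_div_two_lt_exp (log_pos (by linarith : 1 < 1 + x))
  rw [exp_log (by linarith)] at h
  linarith

theorem hasDerivAt_sq_add_two_mul_log_sub (x : ℝ) (hx : 1 + x ≠ 0) :
    HasDerivAt (fun y ↦ (y + 2 * log (1 + y)) ^ 2 - 18 * (y - log (1 + y)))
      (2 * ((x + 2 * log (1 + x)) * (x + 3) - 9 * x) / (1 + x)) x := by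
  have hlog : HasDerivAt (fun y ↦ log (1 + y)) (1 / (1 + x)) x := by
    simpa using ((hasDerivAt_id x).const_add 1).log hx
  refine ((((hasDerivAt_id' x).add (hlog.const_mul 2)).pow 2).sub
    (((hasDerivAt_id' x).sub hlog).const_mul 18)).congr_deriv ?_
  simp only [Pi.add_apply]
  field_simp
  ring

theorem eighteen_mul_sub_log_lt_sq {x : ℝ} (hx : 0 < x) :
    18 * (x - log (1 + x)) < (x + 2 * log (1 + x)) ^ 2 := by
  set h : ℝ → ℝ := fun y ↦ (y + 2 * log (1 + y)) ^ 2 - 18 * (y - log (1 + y))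
  have hderiv (y : ℝ) (hy : 0 ≤ y) :=
    hasDerivAt_sq_add_two_mul_log_sub y (by linarith : 0 < 1 + y).ne'
  have hmono : StrictMonoOn h (Set.Ici 0) := by
    refine strictMonoOn_of_deriv_pos (convex_Ici 0)
      (fun y hy ↦ (hderiv y hy).continuousAt.continuousWithinAt) fun y hy ↦ ?_
    rw [interior_Ici] at hy
    have hy : 0 < y := hy
    rw [(hderiv y hy.le).deriv]
    -- by the bound on `log (1 + y)` the bracket below exceeds `y ^ 3 / (y + 2)`
    have hlog := lt_log_one_add_of_pos hy
    rw [div_lt_iff₀ (by positivity)] at hlog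
    have : 0 < (y + 2 * log (1 + y)) * (y + 3) - 9 * y := by nlinarith [pow_pos hy 3]
    positivity
  simpa [h] using hmono Set.self_mem_Ici hx.le hx

theorem lemma_two (x : ℝ) (hx : 0 < x) :
    2 / 3 * (x - Real.log (1 + x)) < x - Real.sqrt (2 * (x - Real.log (1 + x))) ∧
    x - Real.sqrt (2 * (x - Real.log (1 + x))) < x - Real.log (1 + x) := by
  have hL : 0 < log (1 + x) := log_pos (by linarith)
  constructor
  · have : √(2 * (x - log (1 + x))) < (x + 2 * log (1 + x)) / 3 := by
      rw [sqrt_lt' (by positivity)]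
      linarith [eighteen_mul_sub_log_lt_sq hx]
    linarith
  · have : log (1 + x) < √(2 * (x - log (1 + x))) := by
      rw [lt_sqrt hL.le]
      linarith [sq_log_one_add_add_two_mul_log_lt hx]
    linarith
end

section
/- Let 0 < u < 1 and let w be a real number with w ≤ -1 satisfying w·e^w = -e^{-u-1}. Then -1 - √(2u) - (3/4)·u < w < -1 - √(2u) - (2/3)·u. -/
/-!
Write `w = -1 - v`. Since `x ↦ x * exp x` is strictly decreasing on `(-∞, -1]`, the equation
`w * exp w = -exp (-u - 1)` puts `w` above `-1 - v` exactly when `1 + v < exp (v - u)`, and below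
it exactly when `exp (v - u) < 1 + v`. With `u = s ^ 2 / 2` the two claimed values of `v` turn these
into `1 + s + 3 s² / 8 < exp (s - s² / 8)` and `exp (s - s² / 6) < 1 + s + s² / 3` for
`0 < s ≤ √2`. The first follows from the degree-4 Taylor lower bound for `exp`, the second from the
alternating Taylor bound `exp (-x) ≥ ∑_{i < 6} (-x)ⁱ / i!` for `x ≥ 0`; in both cases what remains
is a polynomial inequality on `[0, √2]`.
-/

open Real Finset
open scoped Nat

namespace Real

lemma hasDerivAt_sum_range_succ_neg_pow_div_factorial (n : ℕ) (x : ℝ) :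
    HasDerivAt (fun t : ℝ => ∑ i ∈ range (n + 1), (-t) ^ i / (i ! : ℝ))
      (-∑ i ∈ range n, (-x) ^ i / (i ! : ℝ)) x := by
  have hterm (i : ℕ) : HasDerivAt (fun t : ℝ => (-t) ^ (i + 1) / ((i + 1)! : ℝ))
      (-((-x) ^ i / (i ! : ℝ))) x := by
    refine (((hasDerivAt_neg x).fun_pow (i + 1)).div_const _).congr_deriv ?_
    rw [Nat.factorial_succ]
    push_cast
    field_simp
  simp_rw [sum_range_succ' _ n]
  simpa [sum_neg_distrib] using (HasDerivAt.fun_sum fun i _ => hterm i).add_const 1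

lemma neg_one_pow_mul_exp_neg_sub_sum_nonneg (n : ℕ) {x : ℝ} (hx : 0 ≤ x) :
    0 ≤ (-1) ^ n * (exp (-x) - ∑ i ∈ range n, (-x) ^ i / (i ! : ℝ)) := by
  induction n generalizing x with
  | zero => simpa using (exp_pos _).le
  | succ n ih =>
    set g : ℝ → ℝ :=
      fun t => (-1) ^ (n + 1) * (exp (-t) - ∑ i ∈ range (n + 1), (-t) ^ i / (i ! : ℝ))
    have hg (t : ℝ) :
        HasDerivAt g ((-1) ^ n * (exp (-t) - ∑ i ∈ range n, (-t) ^ i / (i ! : ℝ))) t :=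
      (((hasDerivAt_neg t).exp.sub
        (hasDerivAt_sum_range_succ_neg_pow_div_factorial n t)).const_mul _).congr_deriv (by ring)
    have hmono : MonotoneOn g (Set.Ici 0) :=
      monotoneOn_of_hasDerivWithinAt_nonneg (convex_Ici 0)
        (fun t _ => (hg t).continuousAt.continuousWithinAt)
        (fun t _ => (hg t).hasDerivWithinAt) fun t ht => ih (interior_subset ht)
    calc 0 = g 0 := by simp [g, sum_range_succ']
      _ ≤ g x := hmono Set.self_mem_Ici hx hx

lemma one_add_add_lt_exp_sub {s : ℝ} (hs : 0 < s) (hs2 : s ^ 2 ≤ 2) :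
    1 + s + 3 / 8 * s ^ 2 < exp (s - s ^ 2 / 8) := by
  have hx : 0 ≤ s - s ^ 2 / 8 := by nlinarith
  have htaylor := sum_le_exp_of_nonneg hx 5
  norm_num [sum_range_succ, Nat.factorial] at htaylor
  -- `3072 / s³` times the gap between the degree-4 Taylor polynomial and the left-hand side
  have hq : 0 < 128 - 40 * s - 40 * s ^ 2 + 11 * s ^ 3 - s ^ 4 + s ^ 5 / 32 := by
    nlinarith [mul_nonneg hs.le (sub_nonneg.2 hs2), mul_nonneg (sq_nonneg s) (sub_nonneg.2 hs2)]
  refine lt_of_lt_of_le ?_ htaylor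
  linear_combination mul_pos (pow_pos hs 3) hq / 3072

lemma exp_sub_lt_one_add_add {s : ℝ} (hs : 0 < s) (hs2 : s ^ 2 ≤ 2) :
    exp (s - s ^ 2 / 6) < 1 + s + s ^ 2 / 3 := by
  have hx : 0 ≤ s - s ^ 2 / 6 := by nlinarith
  have htaylor := neg_one_pow_mul_exp_neg_sub_sum_nonneg 6 hx
  norm_num [sum_range_succ, Nat.factorial] at htaylor
  -- `2799360 / s⁴` times the gap `(1 + s + s² / 3) * ∑_{i < 6} (-x)ⁱ / i! - 1`, `x = s - s² / 6`
  have hq : 0 < 77760 - 62208 * s + 30672 * s ^ 2 - 14256 * s ^ 3 + 6210 * s ^ 4 - 1800 * s ^ 5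
      + 303 * s ^ 6 - 27 * s ^ 7 + s ^ 8 := by
    nlinarith [mul_nonneg hs.le (sub_nonneg.2 hs2), mul_nonneg (sq_nonneg s) (sub_nonneg.2 hs2),
      sq_nonneg (s - 1), sq_nonneg (s ^ 2 - 2 * s)]
  have hlt : 1 < (1 + s + s ^ 2 / 3) * exp (s ^ 2 / 6 - s) := by
    refine lt_of_lt_of_le ?_ (mul_le_mul_of_nonneg_left htaylor (by positivity))
    linear_combination mul_pos (pow_pos hs 4) hq / 2799360
  rwa [show s ^ 2 / 6 - s = -(s - s ^ 2 / 6) by ring, exp_neg, ← div_eq_mul_inv,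
    one_lt_div (exp_pos _)] at hlt

lemma strictAntiOn_mul_exp : StrictAntiOn (fun x : ℝ => x * exp x) (Set.Iic (-1)) := by
  refine strictAntiOn_of_deriv_neg (convex_Iic _) (by fun_prop) fun x hx => ?_
  rw [interior_Iic, Set.mem_Iio] at hx
  rw [((hasDerivAt_id' x).fun_mul (hasDerivAt_exp x)).deriv]
  nlinarith [exp_pos x]

lemma exp_neg_sub_one_eq_mul (u v : ℝ) : exp (-u - 1) = exp (v - u) * exp (-1 - v) := by
  rw [← exp_add]
  ring_nf

lemma neg_one_sub_mul_exp_lt_neg_exp_iff {u v : ℝ} :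
    (-1 - v) * exp (-1 - v) < -exp (-u - 1) ↔ exp (v - u) < 1 + v := by
  rw [exp_neg_sub_one_eq_mul u v, show (-1 - v) * exp (-1 - v) = -((1 + v) * exp (-1 - v)) by ring,
    neg_lt_neg_iff, mul_lt_mul_iff_left₀ (exp_pos _)]

lemma neg_exp_lt_neg_one_sub_mul_exp_iff {u v : ℝ} :
    -exp (-u - 1) < (-1 - v) * exp (-1 - v) ↔ 1 + v < exp (v - u) := by
  rw [exp_neg_sub_one_eq_mul u v, show (-1 - v) * exp (-1 - v) = -((1 + v) * exp (-1 - v)) by ring,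
    neg_lt_neg_iff, mul_lt_mul_iff_left₀ (exp_pos _)]

end Real

theorem lambert_Wm1_bounds_unit_interval (u w : ℝ) (hu0 : 0 < u) (hu1 : u < 1)
    (hw : w ≤ -1) (hWw : w * Real.exp w = -Real.exp (-u - 1)) :
    -1 - Real.sqrt (2 * u) - 3 / 4 * u < w ∧ w < -1 - Real.sqrt (2 * u) - 2 / 3 * u := by
  obtain ⟨s, hs, rfl⟩ : ∃ s > 0, u = s ^ 2 / 2 :=
    ⟨√(2 * u), by positivity, by rw [sq_sqrt (by positivity)]; ring⟩
  have hs2 : s ^ 2 ≤ 2 := by linarith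
  rw [show 2 * (s ^ 2 / 2) = s ^ 2 by ring, sqrt_sq hs.le]
  have hmem {c : ℝ} (hc : 0 ≤ c) : -1 - s - c * (s ^ 2 / 2) ∈ Set.Iic (-1) := by
    simp only [Set.mem_Iic]
    nlinarith
  constructor
  · rw [← strictAntiOn_mul_exp.lt_iff_gt hw (hmem (by norm_num)), hWw,
      show -1 - s - 3 / 4 * (s ^ 2 / 2) = -1 - (s + 3 / 4 * (s ^ 2 / 2)) by ring,
      neg_exp_lt_neg_one_sub_mul_exp_iff]
    convert one_add_add_lt_exp_sub hs hs2 using 1 <;> ring_nf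
  · rw [← strictAntiOn_mul_exp.lt_iff_gt (hmem (by norm_num)) hw, hWw,
      show -1 - s - 2 / 3 * (s ^ 2 / 2) = -1 - (s + 2 / 3 * (s ^ 2 / 2)) by ring,
      neg_one_sub_mul_exp_lt_neg_exp_iff]
    convert exp_sub_lt_one_add_add hs hs2 using 1 <;> ring_nf
end

section
/- Let γ̄ > 0, θ > 0 and θ' > 0, and let w be the real number with w ≤ -1 satisfying w·e^w = -e^{-1-θ/γ̄}. Then the strict inequality (1 + 2θ'/γ̄)·e^{-2θ'/γ̄} > e^{-θ/γ̄} holds if and only if θ' < -(γ̄/2)·(w + 1). Equivalently, the cooperative outage probability P_c = 1 - (1 + 2θ'/γ̄)·e^{-2θ'/γ̄} is strictly smaller than the non-cooperative outage probability P_nc = 1 - e^{-θ/γ̄} if and only if θ' < -(γ̄/2)·(W_{-1}(-e^{-1-θ/γ̄}) + 1). -/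
/-! The map `t ↦ (1 + t) * exp (-t)` is strictly decreasing on `[0, ∞)`, and the Lambert equation
for `w` says precisely that it takes the value `exp (-θ / γ)` at `c = -(w + 1) ≥ 0`. Hence the
inequality at `t = 2θ'/γ` holds exactly when `2θ'/γ < c`. -/

open Real Set

theorem strictAntiOn_one_add_mul_exp_neg :
    StrictAntiOn (fun t : ℝ => (1 + t) * exp (-t)) (Ici 0) := by
  apply strictAntiOn_of_deriv_neg (convex_Ici 0) (by fun_prop)
  intro x hx
  rw [interior_Ici, mem_Ioi] at hx
  have hderiv : HasDerivAt (fun t : ℝ => (1 + t) * exp (-t)) (-x * exp (-x)) x :=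
    (((hasDerivAt_id' x).const_add 1).mul (hasDerivAt_neg' x).exp).congr_deriv (by ring)
  rw [hderiv.deriv]
  exact mul_neg_of_neg_of_pos (neg_neg_of_pos hx) (exp_pos _)

theorem one_add_mul_exp_neg_lt_iff {s t : ℝ} (hs : 0 ≤ s) (ht : 0 ≤ t) :
    (1 + s) * exp (-s) < (1 + t) * exp (-t) ↔ t < s :=
  strictAntiOn_one_add_mul_exp_neg.lt_iff_gt hs ht

theorem one_add_mul_exp_neg_of_mul_exp_eq {w a : ℝ} (h : w * exp w = -exp (-1 - a)) :
    (1 + -(w + 1)) * exp (-(-(w + 1))) = exp (-a) := by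
  calc (1 + -(w + 1)) * exp (-(-(w + 1))) = -(w * exp w) * exp 1 := by
        rw [neg_neg, exp_add]; ring
    _ = exp (-a) := by rw [h, neg_neg, ← exp_add]; ring_nf

theorem cooperation_beneficial_iff_general (γ θ θ' w : ℝ) (hγ : 0 < γ)
    (hθ' : 0 < θ') (hw : w ≤ -1)
    (hWw : w * Real.exp w = -Real.exp (-1 - θ / γ)) :
    ((1 + 2 * θ' / γ) * Real.exp (-(2 * θ' / γ)) > Real.exp (-(θ / γ)) ↔
      θ' < -(γ / 2) * (w + 1)) ∧
    (1 - (1 + 2 * θ' / γ) * Real.exp (-(2 * θ' / γ)) < 1 - Real.exp (-(θ / γ)) ↔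
      θ' < -(γ / 2) * (w + 1)) := by
  have key : (1 + 2 * θ' / γ) * exp (-(2 * θ' / γ)) > exp (-(θ / γ)) ↔
      θ' < -(γ / 2) * (w + 1) := by
    rw [← one_add_mul_exp_neg_of_mul_exp_eq hWw, gt_iff_lt,
      one_add_mul_exp_neg_lt_iff (by linarith) (by positivity), div_lt_iff₀ hγ]
    constructor <;> intro h <;> linarith
  exact ⟨key, (sub_lt_sub_iff_left 1).trans key⟩

theorem cooperation_beneficial_iff (γ θ θ' w : ℝ) (hγ : 0 < γ) (hθ : 0 < θ)
    (hθ' : 0 < θ') (hw : w ≤ -1)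
    (hWw : w * Real.exp w = -Real.exp (-1 - θ / γ)) :
    ((1 + 2 * θ' / γ) * Real.exp (-(2 * θ' / γ)) > Real.exp (-(θ / γ)) ↔
      θ' < -(γ / 2) * (w + 1)) ∧
    (1 - (1 + 2 * θ' / γ) * Real.exp (-(2 * θ' / γ)) < 1 - Real.exp (-(θ / γ)) ↔
      θ' < -(γ / 2) * (w + 1)) :=
  cooperation_beneficial_iff_general γ θ θ' w hγ hθ' hw hWw
end

section
/- Let γ̄ > 0 and θ > 0 with θ < γ̄, and let θ' satisfy θ ≤ θ' ≤ √(γ̄·θ/2) + θ/3. Then (1 + 2θ'/γ̄)·e^{-2θ'/γ̄} > e^{-θ/γ̄}; that is, the cooperative outage probability P_c = 1 - (1 + 2θ'/γ̄)·e^{-2θ'/γ̄} is strictly smaller than the non-cooperative outage probability P_nc = 1 - e^{-θ/γ̄}, so cooperation is beneficial. -/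
/-!
With `t = θ/γ` and `x = 2θ'/γ` the claim reads `x - t < log (1 + x)`. Since `log (1 + x) - x`
decreases on `[0, ∞)`, it suffices to check the largest admissible `x`, namely `s + s²/3` with
`s = √(2t)`, where the claim becomes `s - s²/6 < log (1 + s + s²/3)`. Both sides vanish at `s = 0`,
and the derivative of their difference is `s³ / (9 (1 + s + s²/3)) > 0`.
-/

open Real Set

lemma one_add_add_sq_div_three_pos (x : ℝ) : 0 < 1 + x + x ^ 2 / 3 := by
  nlinarith [sq_nonneg (x + 3 / 2)]

theorem sub_sq_div_six_lt_log_one_add_add_sq_div_three {s : ℝ} (hs : 0 < s) :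
    s - s ^ 2 / 6 < log (1 + s + s ^ 2 / 3) := by
  set f : ℝ → ℝ := fun y => log (1 + y + y ^ 2 / 3) - y + y ^ 2 / 6 with hf
  set f' : ℝ → ℝ := fun y => (1 + 2 * y / 3) / (1 + y + y ^ 2 / 3) - 1 + y / 3 with hf'
  have hderiv (y : ℝ) : HasDerivAt f (f' y) y := by
    have hP : HasDerivAt (fun y : ℝ => 1 + y + y ^ 2 / 3) (1 + 2 * y / 3) y := by
      refine (((hasDerivAt_id' y).const_add 1).add
        ((hasDerivAt_pow 2 y).div_const 3)).congr_deriv ?_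
      push_cast
      ring
    refine (((hP.log (one_add_add_sq_div_three_pos y).ne').sub (hasDerivAt_id' y)).add
      ((hasDerivAt_pow 2 y).div_const 6)).congr_deriv ?_
    push_cast
    ring
  have hderiv_pos {y : ℝ} (hy : 0 < y) : 0 < f' y := by
    have hP := one_add_add_sq_div_three_pos y
    have hf'_eq : f' y = y ^ 3 / 9 / (1 + y + y ^ 2 / 3) := by
      simp only [hf']
      field_simp
      ring
    rw [hf'_eq]
    positivity
  have hmono : StrictMonoOn f (Ici 0) := by
    refine strictMonoOn_of_deriv_pos (convex_Ici 0)
      (continuous_iff_continuousAt.2 fun y => (hderiv y).continuousAt).continuousOn fun y hy => ?_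
    rw [(hderiv y).deriv]
    exact hderiv_pos (by simpa using hy)
  have hf0_lt := hmono self_mem_Ici hs.le hs
  norm_num [hf] at hf0_lt
  linarith

theorem log_one_add_sub_self_antitoneOn :
    AntitoneOn (fun x : ℝ => log (1 + x) - x) (Ici 0) := by
  intro x hx u hu hxu
  simp only [mem_Ici] at hx hu
  have hx1 : 0 < 1 + x := by linarith
  have hlog := log_le_sub_one_of_pos (div_pos (by linarith : (0 : ℝ) < 1 + u) hx1)
  rw [log_div (by linarith) hx1.ne'] at hlog
  have hquot : (1 + u) / (1 + x) - 1 ≤ u - x := by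
    rw [div_sub_one hx1.ne', div_le_iff₀ hx1]
    nlinarith
  dsimp only
  linarith

theorem exp_neg_lt_one_add_mul_exp_neg {t x : ℝ} (ht : 0 < t) (hx : 0 ≤ x)
    (hxt : x ≤ √(2 * t) + 2 * t / 3) : exp (-t) < (1 + x) * exp (-x) := by
  set s := √(2 * t)
  have hs : 0 < s := sqrt_pos.mpr (by linarith)
  have hs2 : s ^ 2 = 2 * t := sq_sqrt (by linarith)
  have hxs : x ≤ s + s ^ 2 / 3 := by rw [hs2]; linarith
  have hlog : x - t < log (1 + x) := by
    have hend := sub_sq_div_six_lt_log_one_add_add_sq_div_three hs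
    have hanti := log_one_add_sub_self_antitoneOn hx (by simp only [mem_Ici]; positivity) hxs
    simp only [← add_assoc] at hanti
    linarith
  calc exp (-t) = exp (x - t) * exp (-x) := by rw [← exp_add]; ring_nf
    _ < (1 + x) * exp (-x) := by
      gcongr
      rwa [← exp_log (by linarith : 0 < 1 + x), exp_lt_exp]

theorem cooperation_beneficial_region_general (γ θ θ' : ℝ) (hγ : 0 < γ) (hθ : 0 < θ)
    (h1 : θ ≤ θ') (h2 : θ' ≤ Real.sqrt (γ * θ / 2) + θ / 3) :
    (1 + 2 * θ' / γ) * Real.exp (-(2 * θ' / γ)) > Real.exp (-(θ / γ)) := by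
  have hsqrt : 2 / γ * √(γ * θ / 2) = √(2 * (θ / γ)) := by
    rw [← sqrt_sq (by positivity : 0 ≤ 2 / γ), ← sqrt_mul (by positivity)]
    congr 1
    field_simp
  refine exp_neg_lt_one_add_mul_exp_neg (div_pos hθ hγ) (div_nonneg (by linarith) hγ.le) ?_
  calc 2 * θ' / γ ≤ 2 / γ * (√(γ * θ / 2) + θ / 3) := by
        rw [mul_div_right_comm]; gcongr
    _ = √(2 * (θ / γ)) + 2 * (θ / γ) / 3 := by rw [mul_add, hsqrt]; ring

theorem cooperation_beneficial_region (γ θ θ' : ℝ) (hγ : 0 < γ) (hθ : 0 < θ)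
    (hθγ : θ < γ) (h1 : θ ≤ θ') (h2 : θ' ≤ Real.sqrt (γ * θ / 2) + θ / 3) :
    (1 + 2 * θ' / γ) * Real.exp (-(2 * θ' / γ)) > Real.exp (-(θ / γ)) :=
  cooperation_beneficial_region_general γ θ θ' hγ hθ h1 h2
end

section
/- Let γ̄ > 0 and θ > 0 with θ < γ̄, and let θ' satisfy θ' ≥ √(γ̄·θ/2) + (3/8)·θ. Then (1 + 2θ'/γ̄)·e^{-2θ'/γ̄} ≤ e^{-θ/γ̄}; that is, the cooperative outage probability P_c = 1 - (1 + 2θ'/γ̄)·e^{-2θ'/γ̄} is at least the non-cooperative outage probability P_nc = 1 - e^{-θ/γ̄}, so cooperation should be avoided. -/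
lemma taylor4_le_exp {y : ℝ} (hy : 0 ≤ y) :
    1 + y + y^2/2 + y^3/6 + y^4/24 ≤ Real.exp y := by
  have := Real.sum_le_exp_of_nonneg hy 5
  simp [Finset.sum_range_succ, Nat.factorial] at this
  linarith

lemma key_poly (s : ℝ) (hs : 0 ≤ s) (h2 : s^2 ≤ 2) :
    1 + (s + 3/8*s^2) ≤ 1 + (s - s^2/8) + (s - s^2/8)^2/2 + (s - s^2/8)^3/6 + (s - s^2/8)^4/24 := by
  nlinarith [mul_nonneg (mul_nonneg hs hs) hs,
    mul_nonneg (mul_nonneg (mul_nonneg hs hs) hs) hs,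
    mul_nonneg (mul_nonneg (mul_nonneg hs hs) hs) (sub_nonneg.mpr h2),
    mul_nonneg (mul_nonneg (mul_nonneg (mul_nonneg hs hs) hs) hs) (sub_nonneg.mpr h2),
    mul_nonneg (mul_nonneg (mul_nonneg (mul_nonneg (mul_nonneg hs hs) hs) hs) hs) (sub_nonneg.mpr h2),
    mul_nonneg (mul_nonneg (mul_nonneg (mul_nonneg (mul_nonneg (mul_nonneg hs hs) hs) hs) hs) hs) (sub_nonneg.mpr h2),
    sq_nonneg (s^2-2), sq_nonneg (s-1),
    mul_nonneg (mul_nonneg (mul_nonneg hs hs) hs) (sq_nonneg (s-1))]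

lemma s_le_two {s : ℝ} (hs : 0 ≤ s) (h2 : s ^ 2 ≤ 2) : s - s ^ 2 / 8 ≥ 0 := by
  nlinarith [sq_nonneg (s - 2)]

theorem cooperation_avoid_region (γ θ θ' : ℝ) (hγ : 0 < γ) (hθ : 0 < θ)
    (hθγ : θ < γ) (h : θ' ≥ Real.sqrt (γ * θ / 2) + 3 / 8 * θ) :
    (1 + 2 * θ' / γ) * Real.exp (-(2 * θ' / γ)) ≤ Real.exp (-(θ / γ)) := by
  have ht : 0 < θ / γ := div_pos hθ hγ
  have ht1 : θ / γ < 1 := (div_lt_one hγ).mpr hθγ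
  set t : ℝ := θ / γ with ht_def
  set s := Real.sqrt (2 * t) with hs_def
  have hs : 0 ≤ s := Real.sqrt_nonneg _
  have hs2 : s ^ 2 = 2 * t := Real.sq_sqrt (by linarith)
  have hs2' : s ^ 2 ≤ 2 := by rw [hs2]; linarith
  have hgs2 : γ * s ^ 2 = 2 * θ := by
    rw [hs2, ht_def]; field_simp
  have hsqrt : Real.sqrt (γ * θ / 2) = γ * s / 2 := by
    rw [show γ * θ / 2 = (γ * s / 2) ^ 2 by nlinarith]
    exact Real.sqrt_sq (by positivity)
  set x := 2 * θ' / γ with hx_def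
  set x₀ : ℝ := s + 3 / 8 * s ^ 2 with hx0_def
  have hx0 : 0 ≤ x₀ := by positivity
  have hx : x₀ ≤ x := by
    rw [hx_def, le_div_iff₀ hγ, hx0_def]
    rw [hsqrt] at h
    have hexp : (s + 3 / 8 * s ^ 2) * γ = s * γ + 3 / 4 * θ := by
      linear_combination (3 / 8) * hgs2
    rw [hexp]; linarith
  -- Step A: (1+x)e^{-x} is decreasing in x
  have stepA : (1 + x) * Real.exp (-x) ≤ (1 + x₀) * Real.exp (-x₀) := by
    have h1 : 1 + x ≤ (1 + x₀) * Real.exp (x - x₀) := by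
      have := Real.add_one_le_exp (x - x₀)
      nlinarith [Real.exp_pos (x - x₀)]
    calc (1 + x) * Real.exp (-x) ≤ (1 + x₀) * Real.exp (x - x₀) * Real.exp (-x) :=
          mul_le_mul_of_nonneg_right h1 (Real.exp_pos _).le
      _ = (1 + x₀) * Real.exp (-x₀) := by rw [mul_assoc, ← Real.exp_add]; ring_nf
  -- Step B: 1 + x₀ ≤ exp (x₀ - t)
  have hy : 0 ≤ s - s ^ 2 / 8 := s_le_two hs hs2'
  have stepB : 1 + x₀ ≤ Real.exp (x₀ - t) := by
    have hxt : x₀ - t = s - s ^ 2 / 8 := by rw [hx0_def]; linarith [hs2]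
    rw [hxt, hx0_def]
    have htay := taylor4_le_exp hy
    have hpoly := key_poly s hs hs2'
    linarith
  have hfin : (1 + x₀) * Real.exp (-x₀) ≤ Real.exp (-t) := by
    have h2 : (1 + x₀) * Real.exp (-x₀) ≤ Real.exp (x₀ - t) * Real.exp (-x₀) :=
      mul_le_mul_of_nonneg_right stepB (Real.exp_pos _).le
    rwa [← Real.exp_add, show x₀ - t + -x₀ = -t by ring] at h2
  linarith
end
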